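/- arXiv:2605.08126 — 2 statements merged into one kernel-verified Lean document; each statement's English description precedes it below -/
import Mathlib

section
/- Let A be an associative algebra over a commutative ring R, let λ ∈ R, and let P : A → A be a Rota-Baxter operator of weight λ. Define the bracket [x,y]_P := [P(x),y] + [x,P(y)] + λ[x,y], where [a,b] = ab − ba is the commutator. Then (A, [·,·]_P) is a Lie algebra: the bracket is bilinear, antisymmetric ([y,x]_P = −[x,y]_P), and satisfies the Jacobi identity [[x,y]_P,z]_P + [[y,z]_P,x]_P + [[z,x]_P,y]_P = 0 for all x,y,z ∈ A. -/
/-- The deformed bracket induced by a Rota-Baxter operator `P` of weight `l`: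
`[x,y]_P = [P x, y] + [x, P y] + l • [x, y]`, where `[a,b] = a*b - b*a`. -/
def rbBracket {R A : Type*} [CommRing R] [Ring A] [Algebra R A]
    (l : R) (P : A →ₗ[R] A) (x y : A) : A :=
  (P x * y - y * P x) + (x * P y - P y * x) + l • (x * y - y * x)

/-- If `P` is a Rota-Baxter operator of weight `l` on an associative algebra `A`,
then the deformed bracket `[·,·]_P` is bilinear, antisymmetric and satisfies the
Jacobi identity, i.e. `(A, [·,·]_P)` is a Lie algebra. -/
theorem rbBracket_lieAlgebra {R A : Type*} [CommRing R] [Ring A] [Algebra R A]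
    (l : R) (P : A →ₗ[R] A)
    (hRB : ∀ x y : A, P x * P y = P (x * P y) + P (P x * y) + l • P (x * y)) :
    (∀ x x' y : A, rbBracket l P (x + x') y = rbBracket l P x y + rbBracket l P x' y) ∧
    (∀ (c : R) (x y : A), rbBracket l P (c • x) y = c • rbBracket l P x y) ∧
    (∀ x y y' : A, rbBracket l P x (y + y') = rbBracket l P x y + rbBracket l P x y') ∧
    (∀ (c : R) (x y : A), rbBracket l P x (c • y) = c • rbBracket l P x y) ∧
    (∀ x y : A, rbBracket l P y x = - rbBracket l P x y) ∧
    (∀ x y z : A,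
      rbBracket l P (rbBracket l P x y) z + rbBracket l P (rbBracket l P y z) x +
        rbBracket l P (rbBracket l P z x) y = 0) := by
  refine ⟨?_, ?_, ?_, ?_, ?_, ?_⟩
  · intro x x' y
    simp only [rbBracket, map_add, add_mul, mul_add, smul_add, smul_sub]
    abel
  · intro c x y
    simp only [rbBracket, map_smul, smul_mul_assoc, mul_smul_comm, smul_sub, smul_add, smul_smul, mul_comm l]
  · intro x y y'
    simp only [rbBracket, map_add, add_mul, mul_add, smul_add, smul_sub]
    abel
  · intro c x y
    simp only [rbBracket, map_smul, smul_mul_assoc, mul_smul_comm, smul_sub, smul_add, smul_smul, mul_comm l]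
  · intro x y
    simp only [rbBracket, neg_add, neg_sub, smul_sub]
    abel
  · intro x y z
    simp only [rbBracket, map_add, map_sub, map_smul, hRB]
    simp only [smul_sub, smul_add, smul_smul, mul_add, add_mul, mul_sub, sub_mul,
      smul_mul_assoc, mul_smul_comm, map_add, map_sub, map_smul, ← mul_assoc, hRB]
    simp only [mul_assoc, hRB]
    simp only [smul_sub, smul_add, smul_smul, mul_add, add_mul, mul_sub, sub_mul,
      smul_mul_assoc, mul_smul_comm, map_add, map_sub, map_smul, mul_assoc, hRB]
    abel
end

section
/- Let α₀ ≥ 0, β ∈ (0,1), φ > 0 with φ > s* := α₀/(1−β), and let (aₖ) be nonnegative reals with a_{k+1} ≤ α₀ + β·aₖ for all k and a₀ > φ. Then for every natural number k ≥ ln((a₀ − s*)/(φ − s*))/ln(1/β), one has aₖ ≤ φ. In particular the reaching time into the band {a ≤ φ} is at most ⌈ln((a₀−s*)/(φ−s*))/ln(1/β)⌉ steps. -/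
/-!
Writing `s* = α₀ / (1 - β)` for the fixed point of `a ↦ α₀ + β a`, the recursion gives
`a k - s* ≤ β ^ k (a 0 - s*)`: the excess over the fixed point decays geometrically. Taking
logarithms, the bound on `k` says exactly that `β ^ k (a 0 - s*) ≤ φ - s*`.
-/

theorem sub_le_pow_mul_of_le_add_mul {α β s : ℝ} {a : ℕ → ℝ} (hβ : 0 ≤ β)
    (hs : α + β * s = s) (hrec : ∀ k, a (k + 1) ≤ α + β * a k) (k : ℕ) :
    a k - s ≤ β ^ k * (a 0 - s) := by
  induction k with
  | zero => simp
  | succ k ih =>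
    calc a (k + 1) - s ≤ β * (a k - s) := by linarith [hrec k]
      _ ≤ β * (β ^ k * (a 0 - s)) := mul_le_mul_of_nonneg_left ih hβ
      _ = β ^ (k + 1) * (a 0 - s) := by ring

theorem pow_mul_le_of_log_div_le {β x y : ℝ} {k : ℕ} (hβ : 0 < β) (hy : 0 < y)
    (hk : Real.log (x / y) ≤ k * Real.log (1 / β)) : β ^ k * x ≤ y := by
  rcases le_or_gt x 0 with hx | hx
  · nlinarith [pow_pos hβ k]
  have hβk : 0 < β ^ k := pow_pos hβ k
  rw [← Real.log_pow, Real.log_le_log_iff (div_pos hx hy) (by positivity), one_div_pow,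
    div_le_div_iff₀ hy hβk] at hk
  linarith

theorem reaching_time_bound_general (α₀ β φ : ℝ)
    (hβ0 : 0 < β) (hβ1 : β < 1)
    (hfix : α₀ / (1 - β) < φ)
    (a : ℕ → ℝ)
    (hrec : ∀ k, a (k + 1) ≤ α₀ + β * a k) :
    ∀ k : ℕ,
      Real.log ((a 0 - α₀ / (1 - β)) / (φ - α₀ / (1 - β))) / Real.log (1 / β) ≤ (k : ℝ) →
      a k ≤ φ := by
  intro k hk
  set s := α₀ / (1 - β) with hs_def
  have hs : α₀ + β * s = s := by
    rw [hs_def]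
    field_simp [(sub_pos.2 hβ1).ne']
    ring
  have hlog : 0 < Real.log (1 / β) := Real.log_pos ((one_lt_div hβ0).2 hβ1)
  have hdecay := sub_le_pow_mul_of_le_add_mul hβ0.le hs hrec k
  have hreach := pow_mul_le_of_log_div_le hβ0 (sub_pos.2 hfix) ((div_le_iff₀ hlog).1 hk)
  linarith

/-- Quasi-sliding-mode reaching-time bound: for the affine contraction
recursion `a_{k+1} ≤ α₀ + β·a_k` with `β ∈ (0,1)`, fixed point
`s* = α₀/(1−β) < φ` and `a₀ > φ`, every step index
`k ≥ ln((a₀ − s*)/(φ − s*)) / ln(1/β)` satisfies `a_k ≤ φ`. -/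
theorem reaching_time_bound (α₀ β φ : ℝ) (hα : 0 ≤ α₀)
    (hβ0 : 0 < β) (hβ1 : β < 1) (hφ : 0 < φ)
    (hfix : α₀ / (1 - β) < φ)
    (a : ℕ → ℝ) (ha : ∀ k, 0 ≤ a k)
    (hrec : ∀ k, a (k + 1) ≤ α₀ + β * a k)
    (ha0 : φ < a 0) :
    ∀ k : ℕ,
      Real.log ((a 0 - α₀ / (1 - β)) / (φ - α₀ / (1 - β))) / Real.log (1 / β) ≤ (k : ℝ) →
      a k ≤ φ :=
  reaching_time_bound_general α₀ β φ hβ0 hβ1 hfix a hrec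
end
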